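/- Let X, Y be finitely valued random variables and let A be uniform on {1,...,K} and independent of (X,Y). With Y_j = Y if A = j and Y_j = e otherwise, for every j one has H(X|Y_j, A) + I(X;A) = H(X|Y) + ((K-1)/K) I(X;Y). -/

import Mathlib

open Finset

section Defs

/-- Probability of the event `X = x` under the mass function `μ`. -/
noncomputable def pr {Ω : Type*} [Fintype Ω] (μ : Ω → ℝ) {α : Type*} [Fintype α]
    [DecidableEq α] (X : Ω → α) (x : α) : ℝ :=
  ∑ ω, if X ω = x then μ ω else 0

/-- Shannon entropy (base 2) of a finitely valued random variable. -/
noncomputable def ent {Ω : Type*} [Fintype Ω] (μ : Ω → ℝ) {α : Type*} [Fintype α]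
    [DecidableEq α] (X : Ω → α) : ℝ :=
  - ∑ x, pr μ X x * Real.logb 2 (pr μ X x)

/-- Conditional entropy `H(X|Y) = H(X,Y) - H(Y)`. -/
noncomputable def condEnt {Ω : Type*} [Fintype Ω] (μ : Ω → ℝ) {α β : Type*}
    [Fintype α] [DecidableEq α] [Fintype β] [DecidableEq β]
    (X : Ω → α) (Y : Ω → β) : ℝ :=
  ent μ (fun ω => (X ω, Y ω)) - ent μ Y

/-- Mutual information `I(X;Y) = H(X) - H(X|Y)`. -/
noncomputable def mi {Ω : Type*} [Fintype Ω] (μ : Ω → ℝ) {α β : Type*}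
    [Fintype α] [DecidableEq α] [Fintype β] [DecidableEq β]
    (X : Ω → α) (Y : Ω → β) : ℝ :=
  ent μ X - condEnt μ X Y

/-- Conditional mutual information `I(X;Y|Z) = H(X|Z) - H(X|Y,Z)`. -/
noncomputable def cmi {Ω : Type*} [Fintype Ω] (μ : Ω → ℝ) {α β γ : Type*}
    [Fintype α] [DecidableEq α] [Fintype β] [DecidableEq β] [Fintype γ] [DecidableEq γ]
    (X : Ω → α) (Y : Ω → β) (Z : Ω → γ) : ℝ :=
  condEnt μ X Z - condEnt μ X (fun ω => (Y ω, Z ω))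

/-- `μ` is a probability mass function on the finite sample space `Ω`. -/
def IsProb {Ω : Type*} [Fintype Ω] (μ : Ω → ℝ) : Prop :=
  (∀ ω, 0 ≤ μ ω) ∧ ∑ ω, μ ω = 1

/-- `A` and `Y` are conditionally independent given `X` (Markov chain `A - X - Y`). -/
def CondIndep {Ω : Type*} [Fintype Ω] (μ : Ω → ℝ) {α β γ : Type*}
    [Fintype α] [DecidableEq α] [Fintype β] [DecidableEq β] [Fintype γ] [DecidableEq γ]
    (A : Ω → α) (Y : Ω → β) (X : Ω → γ) : Prop :=
  ∀ a y x, pr μ (fun ω => (A ω, Y ω, X ω)) (a, y, x) * pr μ X x =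
    pr μ (fun ω => (A ω, X ω)) (a, x) * pr μ (fun ω => (Y ω, X ω)) (y, x)

/-- Binary entropy function (base 2). -/
noncomputable def H2 (p : ℝ) : ℝ :=
  -(p * Real.logb 2 p) - (1 - p) * Real.logb 2 (1 - p)

end Defs

/-! Because `A` is independent of `(X, Y)`, conditioning on `A = a` leaves the law of `(X, Y)`
unchanged, so `H(X | Y_j, A) = ∑ₐ P(A = a) H(X | Y_j, A = a)` and `I(X; A) = 0`. For `a = j`
the observation is `Y` itself, contributing `H(X | Y)`; for `a ≠ j` it is the constant `e`,
contributing `H(X)`. With `A` uniform this gives `H(X|Y)/K + (K-1)/K · H(X)`, which is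
`H(X|Y) + (K-1)/K · I(X;Y)`. -/

lemma mul_logb_mul (b x y : ℝ) :
    x * y * Real.logb b (x * y) = x * y * Real.logb b x + x * (y * Real.logb b y) := by
  rcases eq_or_ne x 0 with rfl | hx
  · simp
  rcases eq_or_ne y 0 with rfl | hy
  · simp
  rw [Real.logb_mul hx hy]
  ring

lemma Fintype.sum_ite_eq_add_mul {ι M : Type*} [Fintype ι] [DecidableEq ι] [CommRing M]
    (i : ι) (u v : M) :
    ∑ a, (if a = i then u else v) = u + (Fintype.card ι - 1) * v := by
  rw [Fintype.sum_eq_add_sum_compl i, if_pos rfl,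
    Finset.sum_congr rfl fun a ha => if_neg (Finset.mem_compl.mp ha ∘ Finset.mem_singleton.mpr),
    Finset.sum_const, Finset.card_compl, Finset.card_singleton, nsmul_eq_mul,
    Nat.cast_sub (Fintype.card_pos_iff.mpr ⟨i⟩), Nat.cast_one]

section Entropy

variable {Ω : Type*} [Fintype Ω] (μ : Ω → ℝ)
variable {α τ γ δ : Type*} [Fintype α] [DecidableEq α] [Fintype τ] [DecidableEq τ]
  [Fintype γ] [DecidableEq γ] [Fintype δ] [DecidableEq δ]

def IndepPr (A : Ω → γ) (T : Ω → τ) : Prop :=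
  ∀ a t, pr μ (fun ω => (A ω, T ω)) (a, t) = pr μ A a * pr μ T t

lemma pr_comp (T : Ω → τ) (F : τ → δ) (d : δ) :
    pr μ (fun ω => F (T ω)) d = ∑ t, if F t = d then pr μ T t else 0 := by
  rw [pr, ← Finset.sum_fiberwise Finset.univ T]
  refine Finset.sum_congr rfl fun t _ => ?_
  by_cases h : F t = d <;> simp +contextual [pr, Finset.sum_filter, h]

lemma sum_pr (T : Ω → τ) : ∑ t, pr μ T t = ∑ ω, μ ω := by
  simp only [pr]
  rw [Finset.sum_comm]
  simp

lemma ent_comp_of_injective {f : τ → δ} (hf : Function.Injective f) (T : Ω → τ) :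
    ent μ (fun ω => f (T ω)) = ent μ T := by
  unfold ent
  congr 1
  refine (Fintype.sum_of_injective f hf _ _ (fun d hd => ?_) (fun t => ?_)).symm
  · have : ∀ t, f t ≠ d := fun t ht => hd ⟨t, ht⟩
    simp [pr_comp, this]
  · simp [pr_comp, hf.eq_iff]

lemma ent_const (h1 : ∑ ω, μ ω = 1) (c : δ) : ent μ (fun _ => c) = 0 := by
  have hc : ∀ d, pr μ (fun _ => c) d = if c = d then 1 else 0 := fun d => by
    split_ifs <;> simp [pr, *]
  simp [ent, hc]

lemma condEnt_comp_right_of_injective {f : τ → δ} (hf : Function.Injective f)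
    (X : Ω → α) (T : Ω → τ) :
    condEnt μ X (fun ω => f (T ω)) = condEnt μ X T := by
  rw [condEnt, condEnt, ent_comp_of_injective μ hf T]
  congr 1
  exact ent_comp_of_injective μ (Function.injective_id.prodMap hf) fun ω => (X ω, T ω)

lemma condEnt_const_right (h1 : ∑ ω, μ ω = 1) (X : Ω → α) (c : δ) :
    condEnt μ X (fun _ => c) = ent μ X := by
  rw [condEnt, ent_const μ h1, sub_zero]
  exact ent_comp_of_injective μ (f := fun x : α => (x, c)) (fun _ _ h => (Prod.mk.inj h).1) X

variable {μ} {A : Ω → γ} {T : Ω → τ}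

lemma IndepPr.pr_pair (hInd : IndepPr μ A T) (F : γ → τ → δ) (d : δ) (a : γ) :
    pr μ (fun ω => (F (A ω) (T ω), A ω)) (d, a)
      = pr μ A a * pr μ (fun ω => F a (T ω)) d := by
  rw [pr_comp μ (fun ω => (A ω, T ω)) (fun p => (F p.1 p.2, p.1)), pr_comp μ T (F a),
    Fintype.sum_prod_type, Finset.sum_eq_single a, Finset.mul_sum]
  · simp [hInd a]
  · intro b _ hb
    simp [hb]
  · simp

lemma IndepPr.ent_pair (h1 : ∑ ω, μ ω = 1) (hInd : IndepPr μ A T) (F : γ → τ → δ) :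
    ent μ (fun ω => (F (A ω) (T ω), A ω))
      = ent μ A + ∑ a, pr μ A a * ent μ (fun ω => F a (T ω)) := by
  have hmass : ∀ a, ∑ d, pr μ (fun ω => F a (T ω)) d = 1 := fun a => (sum_pr μ _).trans h1
  simp only [ent, Fintype.sum_prod_type, hInd.pr_pair, mul_logb_mul]
  rw [Finset.sum_comm]
  simp only [Finset.sum_add_distrib, ← Finset.sum_mul, ← Finset.mul_sum, hmass, mul_one,
    mul_neg, Finset.sum_neg_distrib]
  ring

lemma IndepPr.condEnt_pair (h1 : ∑ ω, μ ω = 1) (hInd : IndepPr μ A T) (G : τ → α)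
    (F : γ → τ → δ) :
    condEnt μ (fun ω => G (T ω)) (fun ω => (F (A ω) (T ω), A ω))
      = ∑ a, pr μ A a * condEnt μ (fun ω => G (T ω)) (fun ω => F a (T ω)) := by
  have hassoc : ent μ (fun ω => (G (T ω), F (A ω) (T ω), A ω))
      = ent μ (fun ω => ((G (T ω), F (A ω) (T ω)), A ω)) :=
    ent_comp_of_injective μ (Equiv.prodAssoc α δ γ).injective
      fun ω => ((G (T ω), F (A ω) (T ω)), A ω)
  simp only [condEnt, mul_sub, Finset.sum_sub_distrib, hassoc,
    hInd.ent_pair h1 fun a t => (G t, F a t), hInd.ent_pair h1 F]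
  ring

lemma IndepPr.mi_eq_zero (h1 : ∑ ω, μ ω = 1) (hInd : IndepPr μ A T) (G : τ → α) :
    mi μ (fun ω => G (T ω)) A = 0 := by
  have hA : ∑ a, pr μ A a = 1 := (sum_pr μ A).trans h1
  rw [mi, condEnt, hInd.ent_pair h1 fun _ t => G t, ← Finset.sum_mul, hA]
  ring

end Entropy

theorem stmt3_general {Ω α β : Type*} [Fintype Ω] [Fintype α] [DecidableEq α]
    [Fintype β] [DecidableEq β] {K : ℕ}
    (μ : Ω → ℝ) (hμ : IsProb μ) (X : Ω → α) (Y : Ω → β) (A : Ω → Fin K)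
    (hUnif : ∀ a : Fin K, pr μ A a = 1 / K)
    (hInd : ∀ (a : Fin K) (x : α) (y : β),
      pr μ (fun ω => (A ω, X ω, Y ω)) (a, x, y) =
        pr μ A a * pr μ (fun ω => (X ω, Y ω)) (x, y)) :
    ∀ j : Fin K,
      condEnt μ X
          (fun ω => ((if A ω = j then some (Y ω) else (none : Option β)), A ω))
        + mi μ X A
      = condEnt μ X Y + ((K - 1 : ℝ) / K) * mi μ X Y := by
  intro j
  have hK : (K : ℝ) ≠ 0 := by exact_mod_cast j.pos.ne'
  have hIndep : IndepPr μ A fun ω => (X ω, Y ω) := fun a ⟨x, y⟩ => hInd a x y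
  have hErased : ∀ a, condEnt μ X (fun ω => if a = j then some (Y ω) else none)
      = if a = j then condEnt μ X Y else ent μ X := by
    intro a
    split_ifs
    · exact condEnt_comp_right_of_injective μ (Option.some_injective β) X Y
    · exact condEnt_const_right μ hμ.2 X none
  have hZ := hIndep.condEnt_pair hμ.2 Prod.fst fun a t => if a = j then some t.2 else none
  have hA := hIndep.mi_eq_zero hμ.2 Prod.fst
  dsimp only at hZ hA
  rw [hZ, hA]
  simp only [hUnif, hErased, ← Finset.mul_sum, Fintype.sum_ite_eq_add_mul, Fintype.card_fin, mi]
  field_simp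
  ring

/-- If `A` is uniform on `{1,…,K}` and independent of `(X,Y)`, then
for every `j`, `H(X|Y_j,A) + I(X;A) = H(X|Y) + ((K-1)/K) I(X;Y)`. -/
theorem stmt3 {Ω α β : Type*} [Fintype Ω] [Fintype α] [DecidableEq α]
    [Fintype β] [DecidableEq β] {K : ℕ} (hK : 1 ≤ K)
    (μ : Ω → ℝ) (hμ : IsProb μ) (X : Ω → α) (Y : Ω → β) (A : Ω → Fin K)
    (hUnif : ∀ a : Fin K, pr μ A a = 1 / K)
    (hInd : ∀ (a : Fin K) (x : α) (y : β),
      pr μ (fun ω => (A ω, X ω, Y ω)) (a, x, y) =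
        pr μ A a * pr μ (fun ω => (X ω, Y ω)) (x, y)) :
    ∀ j : Fin K,
      condEnt μ X
          (fun ω => ((if A ω = j then some (Y ω) else (none : Option β)), A ω))
        + mi μ X A
      = condEnt μ X Y + ((K - 1 : ℝ) / K) * mi μ X Y :=
  stmt3_general μ hμ X Y A hUnif hInd
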